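/- Let N be a positive integer, k ≥ 2 an integer, and A_s, A_* real N×N matrices. If A_1 = A_2 = … = A_k = A_* (the homogeneous dynamic graph case), then there exist real N×N matrices B_1, …, B_k, not all equal, such that ℓ(A_s; B_1,…,B_k) < ℓ(A_s; A_1,…,A_k); that is, no homogeneous dynamic graph configuration minimizes the per-sample graph cohesion loss. -/

import Mathlib

/-- Squared Frobenius norm of a real N×N matrix: `∑ i j, (A i j)^2`. -/
noncomputable def frobSq {N : ℕ} (A : Matrix (Fin N) (Fin N) ℝ) : ℝ :=
  ∑ i, ∑ j, (A i j) ^ 2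

/-- Frobenius norm of a real N×N matrix. -/
noncomputable def frobNorm {N : ℕ} (A : Matrix (Fin N) (Fin N) ℝ) : ℝ :=
  Real.sqrt (frobSq A)

/-- Similarity measure `h(X, Y) = exp(−‖X − Y‖_F²)` (temperature τ = 1). -/
noncomputable def hSim {N : ℕ} (X Y : Matrix (Fin N) (Fin N) ℝ) : ℝ :=
  Real.exp (-(frobNorm (X - Y)) ^ 2)

/-- Per-sample graph cohesion loss
`ℓ(A_s; A_1,…,A_k) = ∑_i −log( h(A_s,A_i) / (h(A_s,A_i) + ∑_{j≠i} h(A_i,A_j)) )`. -/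
noncomputable def gcLoss {N k : ℕ} (As : Matrix (Fin N) (Fin N) ℝ)
    (A : Fin k → Matrix (Fin N) (Fin N) ℝ) : ℝ :=
  ∑ i, -Real.log (hSim As (A i) /
    (hSim As (A i) + ∑ j ∈ Finset.univ.erase i, hSim (A i) (A j)))

/-!
Perturb a single dynamic graph: replace `A_{i₀} = A_*` by some `B ≠ A_*`, namely `B = A_s` when
`A_s ≠ A_*`. The `i`-th summand is `log (1 + s_i / h(A_s, A_i))` with `s_i = ∑_{j≠i} h(A_i, A_j)`.
For `i ≠ i₀` it strictly drops, because `h(A_*, B) < 1` replaces `h(A_*, A_*) = 1` in `s_i`,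
while the `i₀`-summand does not grow as long as `h(A_s, A_*) h(A_*, B) ≤ h(A_s, B)`, which holds
for both choices of `B`.
-/

open Real Finset

section FrobeniusSimilarity

variable {N : ℕ}

lemma frobSq_nonneg (A : Matrix (Fin N) (Fin N) ℝ) : 0 ≤ frobSq A := by
  unfold frobSq; positivity

lemma frobSq_eq_zero_iff {A : Matrix (Fin N) (Fin N) ℝ} : frobSq A = 0 ↔ A = 0 := by
  rw [frobSq, sum_eq_zero_iff_of_nonneg fun _ _ => by positivity, ← Matrix.ext_iff]
  simp [sum_eq_zero_iff_of_nonneg, sq_nonneg]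

lemma frobSq_pos {A : Matrix (Fin N) (Fin N) ℝ} (hA : A ≠ 0) : 0 < frobSq A :=
  (frobSq_nonneg A).lt_of_ne' (frobSq_eq_zero_iff.not.mpr hA)

lemma hSim_eq_exp (X Y : Matrix (Fin N) (Fin N) ℝ) : hSim X Y = exp (-frobSq (X - Y)) := by
  rw [hSim, frobNorm, sq_sqrt (frobSq_nonneg _)]

lemma hSim_pos (X Y : Matrix (Fin N) (Fin N) ℝ) : 0 < hSim X Y :=
  exp_pos _

lemma hSim_self (X : Matrix (Fin N) (Fin N) ℝ) : hSim X X = 1 := by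
  rw [hSim_eq_exp, sub_self, frobSq_eq_zero_iff.mpr rfl, neg_zero, exp_zero]

lemma hSim_le_one (X Y : Matrix (Fin N) (Fin N) ℝ) : hSim X Y ≤ 1 := by
  rw [hSim_eq_exp, exp_le_one_iff, neg_nonpos]
  exact frobSq_nonneg _

lemma hSim_lt_one {X Y : Matrix (Fin N) (Fin N) ℝ} (h : X ≠ Y) : hSim X Y < 1 := by
  rw [hSim_eq_exp, exp_lt_one_iff, neg_lt_zero]
  exact frobSq_pos (sub_ne_zero.mpr h)

lemma hSim_comm (X Y : Matrix (Fin N) (Fin N) ℝ) : hSim X Y = hSim Y X := by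
  rw [hSim, hSim, ← neg_sub, frobNorm, frobNorm, frobSq, frobSq]
  simp only [Matrix.neg_apply, neg_sq]

end FrobeniusSimilarity

lemma neg_log_div_add {a : ℝ} (ha : a ≠ 0) (s : ℝ) :
    -log (a / (a + s)) = log (1 + s / a) := by
  rw [← log_inv, inv_div, add_div, div_self ha]

lemma Fin.cast_card_univ_erase {R : Type*} [AddGroupWithOne R] {k : ℕ} (i : Fin k) :
    (#(univ.erase i) : R) = k - 1 := by
  rw [cast_card_erase_of_mem (mem_univ i), card_univ, Fintype.card_fin]

section CohesionLoss

variable {N k : ℕ} (As Astar B : Matrix (Fin N) (Fin N) ℝ)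

lemma gcLoss_const :
    gcLoss As (fun _ : Fin k => Astar) = k * log (1 + ((k : ℝ) - 1) / hSim As Astar) := by
  simp only [gcLoss, hSim_self, sum_const, nsmul_eq_mul, mul_one,
    Fin.cast_card_univ_erase, card_univ, Fintype.card_fin, neg_log_div_add (hSim_pos As Astar).ne']

lemma gcLoss_update_const (i₀ : Fin k) :
    gcLoss As (Function.update (fun _ => Astar) i₀ B) =
      log (1 + ((k : ℝ) - 1) * hSim Astar B / hSim As B) +
        ((k : ℝ) - 1) * log (1 + ((k : ℝ) - 2 + hSim Astar B) / hSim As Astar) := by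
  set A := Function.update (fun _ => Astar) i₀ B
  have hA_self : A i₀ = B := Function.update_self ..
  have hA_of_ne {j : Fin k} (hj : j ≠ i₀) : A j = Astar := Function.update_of_ne hj ..
  have inner_perturbed :
      ∑ j ∈ univ.erase i₀, hSim (A i₀) (A j) = ((k : ℝ) - 1) * hSim Astar B := by
    rw [sum_congr rfl fun j hj => by rw [hA_of_ne (ne_of_mem_erase hj), hA_self, hSim_comm],
      sum_const, nsmul_eq_mul, Fin.cast_card_univ_erase]
  have inner_unperturbed {i : Fin k} (hi : i ≠ i₀) :
      ∑ j ∈ univ.erase i, hSim (A i) (A j) = (k : ℝ) - 2 + hSim Astar B := by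
    have hi₀ : i₀ ∈ univ.erase i := mem_erase.mpr ⟨hi.symm, mem_univ _⟩
    rw [← add_sum_erase _ _ hi₀, hA_of_ne hi, hA_self,
      sum_congr rfl fun j hj => by rw [hA_of_ne (ne_of_mem_erase hj), hSim_self], sum_const,
      nsmul_eq_mul, mul_one, cast_card_erase_of_mem hi₀, Fin.cast_card_univ_erase]
    ring
  rw [gcLoss, ← add_sum_erase _ _ (mem_univ i₀), inner_perturbed, hA_self,
    sum_congr rfl fun i hi => by
      rw [inner_unperturbed (ne_of_mem_erase hi), hA_of_ne (ne_of_mem_erase hi)],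
    sum_const, nsmul_eq_mul, Fin.cast_card_univ_erase, neg_log_div_add (hSim_pos As B).ne',
    neg_log_div_add (hSim_pos As Astar).ne']

lemma gcLoss_update_const_lt_gcLoss_const (hk : 2 ≤ k) (i₀ : Fin k) (hB : B ≠ Astar)
    (hB_sim : hSim As Astar * hSim Astar B ≤ hSim As B) :
    gcLoss As (Function.update (fun _ => Astar) i₀ B) < gcLoss As (fun _ : Fin k => Astar) := by
  rw [gcLoss_update_const, gcLoss_const]
  set c := hSim As Astar
  set w := hSim Astar B
  set g := hSim As B
  set m : ℝ := (k : ℝ) - 1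
  have hc : 0 < c := hSim_pos _ _
  have hm : 1 ≤ m := by
    simp only [m, le_sub_iff_add_le]
    exact_mod_cast hk
  have hw : 0 < w := hSim_pos _ _
  have hg : 0 < g := hSim_pos _ _
  have perturbed_term_le : log (1 + m * w / g) ≤ log (1 + m / c) := by
    refine log_le_log (add_pos one_pos (div_pos (mul_pos (by linarith) hw) hg))
      (add_le_add_right ?_ 1)
    rw [div_le_div_iff₀ hg hc, mul_assoc, mul_comm w]
    gcongr
  have unperturbed_term_lt : log (1 + (m - 1 + w) / c) < log (1 + m / c) := by
    have hw_lt : w < 1 := hSim_lt_one hB.symm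
    refine log_lt_log (by positivity) (add_lt_add_right ?_ 1)
    gcongr
    linarith
  rw [show (k : ℝ) - 2 = m - 1 by ring, show (k : ℝ) = 1 + m by ring]
  nlinarith [mul_lt_mul_of_pos_left unperturbed_term_lt (by linarith : 0 < m)]

end CohesionLoss

lemma exists_ne_hSim_mul_le {N : ℕ} (hN : 0 < N) (As Astar : Matrix (Fin N) (Fin N) ℝ) :
    ∃ B ≠ Astar, hSim As Astar * hSim Astar B ≤ hSim As B := by
  by_cases h : As = Astar
  · subst h
    have : Nonempty (Fin N) := Fin.pos_iff_nonempty.mp hN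
    obtain ⟨B, hB⟩ := exists_ne As
    exact ⟨B, hB, by rw [hSim_self, one_mul]⟩
  · refine ⟨As, h, ?_⟩
    rw [hSim_self]
    exact mul_le_one₀ (hSim_le_one _ _) (hSim_pos _ _).le (hSim_le_one _ _)

/-- For any homogeneous dynamic graph configuration `A_1 = … = A_k = A_*`,
there exist dynamic graphs `B_1,…,B_k`, not all equal, with strictly smaller per-sample
graph cohesion loss; hence no homogeneous configuration minimizes the loss. -/
theorem homogeneous_configuration_not_minimizer
    {N k : ℕ} (hN : 0 < N) (hk : 2 ≤ k)
    (As Astar : Matrix (Fin N) (Fin N) ℝ)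
    (A : Fin k → Matrix (Fin N) (Fin N) ℝ) (hA : ∀ i, A i = Astar) :
    ∃ B : Fin k → Matrix (Fin N) (Fin N) ℝ,
      (∃ i j, B i ≠ B j) ∧ gcLoss As B < gcLoss As A := by
  have : Nontrivial (Fin k) := Fin.nontrivial_iff_two_le.mpr hk
  obtain ⟨i₀, i₁, hi⟩ := exists_pair_ne (Fin k)
  obtain ⟨B, hB, hB_sim⟩ := exists_ne_hSim_mul_le hN As Astar
  refine ⟨Function.update (fun _ => Astar) i₀ B, ⟨i₀, i₁, ?_⟩, ?_⟩
  · rwa [Function.update_self, Function.update_of_ne hi.symm]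
  · rw [funext hA]
    exact gcLoss_update_const_lt_gcLoss_const As Astar B hk i₀ hB hB_sim
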